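/- Let G be a 3-regular finite simple connected super-λ' graph of order 2n with n ≥ 4. Then the girth of G is strictly greater than 4, and n ≠ 4 (hence n ≥ 5). -/

import Mathlib

open SimpleGraph

variable {V : Type*}

/-- The degree of a vertex, as the cardinality of its neighbor set. -/
noncomputable def degN (G : SimpleGraph V) (v : V) : ℕ := (G.neighborSet v).ncard

/-- The minimum degree `δ(G)`. -/
noncomputable def minDeg (G : SimpleGraph V) : ℕ := sInf {k | ∃ v, degN G v = k}

/-- `d_G(X)`: the number of edges of `G` with exactly one endpoint in `X`. -/
noncomputable def dOut (G : SimpleGraph V) (X : Set V) : ℕ :=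
  {e ∈ G.edgeSet | ∃ x ∈ X, ∃ y ∈ Xᶜ, e = s(x, y)}.ncard

/-- `F` is an `h`-extra edge-cut of `G`: a set of edges of `G` whose removal disconnects `G`
and such that every connected component of `G - F` has more than `h` vertices. -/
def IsExtraEdgeCut (G : SimpleGraph V) (h : ℕ) (F : Set (Sym2 V)) : Prop :=
  F ⊆ G.edgeSet ∧ ¬(G.deleteEdges F).Connected ∧
    ∀ c : (G.deleteEdges F).ConnectedComponent, h < c.supp.ncard

/-- `G` is `λ^(h)`-connected: an `h`-extra edge-cut exists. -/
def LambdaConn (G : SimpleGraph V) (h : ℕ) : Prop := ∃ F, IsExtraEdgeCut G h F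

/-- The `h`-extra edge-connectivity `λ^(h)(G)`: the minimum cardinality of an
`h`-extra edge-cut. -/
noncomputable def lambdaH (G : SimpleGraph V) (h : ℕ) : ℕ :=
  sInf {k | ∃ F, IsExtraEdgeCut G h F ∧ F.ncard = k}

/-- `ξ_h(G)`: the minimum of `d_G(X)` over vertex sets `X` of size `h + 1` inducing a
connected subgraph. -/
noncomputable def xiH (G : SimpleGraph V) (h : ℕ) : ℕ :=
  sInf {k | ∃ X : Set V, X.ncard = h + 1 ∧ (G.induce X).Connected ∧ dOut G X = k}

/-- `G` is super-`λ^(h)`: it is connected, `λ^(h)`-connected, `λ^(h)`-optimal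
(`λ^(h)(G) = ξ_h(G)`), and every minimum `h`-extra edge-cut leaves a component with
exactly `h + 1` vertices. -/
def SuperLambda (G : SimpleGraph V) (h : ℕ) : Prop :=
  G.Connected ∧ LambdaConn G h ∧ lambdaH G h = xiH G h ∧
    ∀ F : Set (Sym2 V), IsExtraEdgeCut G h F → F.ncard = lambdaH G h →
      ∃ c : (G.deleteEdges F).ConnectedComponent, c.supp.ncard = h + 1

/-- The persistence `ρ^(h)(G)`: the largest `m` such that `G - F` is super-`λ^(h)` for
every set `F` of at most `m` edges of `G`. -/
noncomputable def rhoH (G : SimpleGraph V) (h : ℕ) : ℕ :=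
  sSup {m : ℕ | ∀ F : Set (Sym2 V), F ⊆ G.edgeSet → F.ncard ≤ m →
    SuperLambda (G.deleteEdges F) h}

/-- `ξ(G)`: the minimum edge-degree `deg x + deg y - 2` over the edges `xy` of `G`. -/
noncomputable def xiEdge (G : SimpleGraph V) : ℕ :=
  sInf {k | ∃ x y, G.Adj x y ∧ degN G x + degN G y - 2 = k}

/-- `η(G)`: the number of edges of `G` whose edge-degree equals `ξ(G)`. -/
noncomputable def eta (G : SimpleGraph V) : ℕ :=
  {e ∈ G.edgeSet | ∃ x y, e = s(x, y) ∧ degN G x + degN G y - 2 = xiEdge G}.ncard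

/-!
By the super-`λ'` property a minimum `1`-extra edge-cut isolates an edge `xy`, so
`λ'(G) ≥ |∂{x, y}| = 4`. A triangle `T` cannot lie in a `K₄` (that would be all of `G`), so
`∂T` is a `1`-extra edge-cut of size `3`, which is impossible. A `4`-cycle `Q` has `|∂Q| ≤ 4`, so `∂Q`
is a minimum cut and must isolate an edge `xy` outside `Q`; then `∂{x, y} = ∂Q`, which leaves no
room for vertices outside `Q ∪ {x, y}`. Hence the girth is at least `5`, and the Moore bound
`|V| ≥ 1 + 3²` rules out `|V| = 8`.
-/

namespace SimpleGraph

variable {G : SimpleGraph V}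

def edgeBoundary (G : SimpleGraph V) (X : Set V) : Set (Sym2 V) :=
  {e ∈ G.edgeSet | ∃ x ∈ X, ∃ y ∉ X, e = s(x, y)}

lemma mk_mem_edgeBoundary {X : Set V} {u v : V} :
    s(u, v) ∈ G.edgeBoundary X ↔ G.Adj u v ∧ (u ∈ X ↔ v ∉ X) := by
  constructor
  · rintro ⟨he, x, hx, y, hy, heq⟩
    rcases Sym2.eq_iff.mp heq with ⟨rfl, rfl⟩ | ⟨rfl, rfl⟩ <;> exact ⟨he, by tauto⟩
  · rintro ⟨hadj, hiff⟩
    by_cases hu : u ∈ X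
    · exact ⟨hadj, u, hu, v, hiff.mp hu, rfl⟩
    · exact ⟨hadj, v, by tauto, u, hu, Sym2.eq_swap⟩

lemma deleteEdges_edgeBoundary_adj {X : Set V} {u v : V} :
    (G.deleteEdges (G.edgeBoundary X)).Adj u v ↔ G.Adj u v ∧ (u ∈ X ↔ v ∈ X) := by
  rw [deleteEdges_adj, mk_mem_edgeBoundary]
  tauto

lemma Reachable.edgeBoundary_nonempty {X : Set V} {u v : V} (h : G.Reachable u v)
    (hu : u ∈ X) (hv : v ∉ X) : (G.edgeBoundary X).Nonempty := by
  obtain ⟨p⟩ := h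
  obtain ⟨d, -, hd₁, hd₂⟩ := p.exists_boundary_dart X hu hv
  exact ⟨s(d.fst, d.snd), mk_mem_edgeBoundary.mpr ⟨d.adj, iff_of_true hd₁ hd₂⟩⟩

lemma Connected.eq_univ_of_edgeBoundary_eq_empty (hG : G.Connected) {X : Set V}
    (hX : X.Nonempty) (h : G.edgeBoundary X = ∅) : X = Set.univ := by
  obtain ⟨x, hx⟩ := hX
  refine Set.eq_univ_of_forall fun v => ?_
  by_contra hv
  exact ((hG.preconnected x v).edgeBoundary_nonempty hx hv).ne_empty h

lemma edgeBoundary_union_eq_empty {X Y : Set V} (hXY : Disjoint X Y)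
    (h : G.edgeBoundary X = G.edgeBoundary Y) : G.edgeBoundary (X ∪ Y) = ∅ := by
  refine Set.eq_empty_of_forall_notMem fun e he => ?_
  induction e using Sym2.ind with
  | _ u v =>
  have hXY' : s(u, v) ∈ G.edgeBoundary X ↔ s(u, v) ∈ G.edgeBoundary Y := by rw [h]
  rw [mk_mem_edgeBoundary, mk_mem_edgeBoundary] at hXY'
  rw [mk_mem_edgeBoundary] at he
  have hu : u ∈ X → u ∉ Y := fun h => Set.disjoint_left.mp hXY h
  have hv : v ∈ X → v ∉ Y := fun h => Set.disjoint_left.mp hXY h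
  simp only [Set.mem_union] at he
  tauto

lemma ConnectedComponent.edgeBoundary_supp_subset {F : Set (Sym2 V)}
    (c : (G.deleteEdges F).ConnectedComponent) : G.edgeBoundary c.supp ⊆ F := by
  rintro e ⟨he, x, hx, y, hy, rfl⟩
  by_contra hF
  exact hy (c.mem_supp_of_adj_mem_supp hx ((deleteEdges_adj ..).mpr ⟨he, hF⟩))

lemma ConnectedComponent.adj_of_supp_eq_pair {H : SimpleGraph V} (c : H.ConnectedComponent)
    {x y : V} (hxy : x ≠ y) (h : c.supp = {x, y}) : H.Adj x y := by
  have hx : x ∈ c.supp := by simp [h]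
  have hy : y ∈ c.supp := by simp [h]
  obtain ⟨p⟩ := c.reachable_of_mem_supp hx hy
  obtain ⟨d, -, hd₁, hd₂⟩ := p.exists_boundary_dart {x} rfl hxy.symm
  rw [Set.mem_singleton_iff] at hd₁ hd₂
  have hd : d.snd ∈ ({x, y} : Set V) := h ▸ c.mem_supp_of_adj_mem_supp (hd₁ ▸ hx) d.adj
  exact hd₁ ▸ hd.resolve_left hd₂ ▸ d.adj

lemma isExtraEdgeCut_one_edgeBoundary [Finite V] {X : Set V} (hX : X.Nonempty)
    (hXc : Xᶜ.Nonempty) (hin : ∀ u ∈ X, (G.neighborSet u ∩ X).Nonempty)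
    (hout : ∀ u ∉ X, (G.neighborSet u \ X).Nonempty) :
    IsExtraEdgeCut G 1 (G.edgeBoundary X) := by
  refine ⟨fun e he => he.1, fun hconn => ?_, fun c => ?_⟩
  · obtain ⟨x, hx⟩ := hX
    obtain ⟨y, hy⟩ := hXc
    obtain ⟨e, he⟩ := (hconn.preconnected x y).edgeBoundary_nonempty hx hy
    induction e using Sym2.ind with
    | _ u v =>
    rw [mk_mem_edgeBoundary, deleteEdges_edgeBoundary_adj] at he
    tauto
  · obtain ⟨u, rfl⟩ := c.exists_rep
    have : ∃ w, G.Adj u w ∧ (u ∈ X ↔ w ∈ X) := by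
      by_cases hu : u ∈ X
      · obtain ⟨w, hw, hwX⟩ := hin u hu
        exact ⟨w, hw, iff_of_true hu hwX⟩
      · obtain ⟨w, hw, hwX⟩ := hout u hu
        exact ⟨w, hw, iff_of_false hu hwX⟩
    obtain ⟨w, huw, hside⟩ := this
    rw [Set.one_lt_ncard_iff]
    exact ⟨u, w, rfl, (G.deleteEdges _).connectedComponentMk u |>.mem_supp_of_adj_mem_supp rfl
      (deleteEdges_edgeBoundary_adj.mpr ⟨huw, hside⟩), huw.ne⟩

lemma edgeBoundary_eq_biUnion (X : Set V) :
    G.edgeBoundary X = ⋃ x ∈ X, (fun y => s(x, y)) '' (G.neighborSet x \ X) := by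
  ext e
  constructor
  · rintro ⟨he, x, hx, y, hy, rfl⟩
    exact Set.mem_biUnion hx ⟨y, ⟨he, hy⟩, rfl⟩
  · simp only [Set.mem_iUnion, Set.mem_image]
    rintro ⟨x, hx, y, ⟨hxy, hy⟩, rfl⟩
    exact ⟨hxy, x, hx, y, hy, rfl⟩

lemma ncard_edgeBoundary [Finite V] (X : Finset V) :
    (G.edgeBoundary X).ncard = ∑ x ∈ X, (G.neighborSet x \ X).ncard := by
  rw [edgeBoundary_eq_biUnion, X.finite_toSet.ncard_biUnion (fun _ _ => Set.toFinite _),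
    finsum_mem_coe_finset]
  · exact Finset.sum_congr rfl fun x _ => Set.ncard_image_of_injective _ (Sym2.mkEmbedding x).inj'
  · rintro x - x' hx' hne
    refine Set.disjoint_left.mpr ?_
    rintro e ⟨y, ⟨-, hy⟩, rfl⟩ ⟨y', ⟨-, hy'⟩, heq⟩
    rcases Sym2.eq_iff.mp heq with ⟨rfl, -⟩ | ⟨rfl, -⟩
    · exact hne rfl
    · exact hy hx'

lemma ncard_neighborSet_sdiff [Finite V] (v : V) (X : Set V) :
    (G.neighborSet v \ X).ncard = degN G v - (G.neighborSet v ∩ X).ncard := by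
  rw [degN, ← Set.ncard_inter_add_ncard_sdiff_eq_ncard (G.neighborSet v) X]
  omega

lemma degN_eq_degree (v : V) [Fintype (G.neighborSet v)] : degN G v = G.degree v := by
  rw [degN, Set.ncard_eq_toFinset_card', ← card_neighborFinset_eq_degree, neighborFinset]

lemma IsClique.neighborSet_inter {s : Set V} (hs : G.IsClique s) {v : V} (hv : v ∈ s) :
    G.neighborSet v ∩ s = s \ {v} := by
  ext w
  simp only [Set.mem_inter_iff, mem_neighborSet, Set.mem_sdiff, Set.mem_singleton_iff]
  exact ⟨fun ⟨hvw, hw⟩ => ⟨hw, hvw.ne'⟩, fun ⟨hw, hwv⟩ => ⟨hs hv hw (Ne.symm hwv), hw⟩⟩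

lemma Connected.card_eq_of_isNClique [Fintype V] {d : ℕ} (hG : G.Connected)
    (hreg : ∀ v, degN G v = d) {s : Finset V} (hs : G.IsNClique (d + 1) s) :
    Fintype.card V = d + 1 := by
  have hempty : G.edgeBoundary s = ∅ := by
    rw [← Set.ncard_eq_zero, ncard_edgeBoundary]
    refine Finset.sum_eq_zero fun v hv => ?_
    rw [ncard_neighborSet_sdiff, hs.isClique.neighborSet_inter hv,
      Set.ncard_sdiff_singleton_of_mem hv, Set.ncard_coe_finset, hs.card_eq, hreg]
    omega
  have hne : (s : Set V).Nonempty := by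
    rw [Finset.coe_nonempty, ← Finset.card_pos, hs.card_eq]
    omega
  rw [← hs.card_eq, ← Finset.card_univ,
    Finset.coe_eq_univ.mp (hG.eq_univ_of_edgeBoundary_eq_empty hne hempty)]

lemma ConnectedComponent.disjoint_supp [Finite V] {X : Set V}
    (hin : ∀ v ∈ X, 2 ≤ (G.neighborSet v ∩ X).ncard)
    (c : (G.deleteEdges (G.edgeBoundary X)).ConnectedComponent) (hc : c.supp.ncard ≤ 2) :
    Disjoint X c.supp := by
  refine Set.disjoint_left.mpr fun v hvX hvc => ?_
  have hsub : insert v (G.neighborSet v ∩ X) ⊆ c.supp :=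
    Set.insert_subset hvc fun w ⟨hvw, hwX⟩ =>
      c.mem_supp_of_adj_mem_supp hvc (deleteEdges_edgeBoundary_adj.mpr ⟨hvw, iff_of_true hvX hwX⟩)
  have := Set.ncard_le_ncard hsub
  rw [Set.ncard_insert_of_notMem fun h => G.loopless.irrefl v h.1] at this
  have := hin v hvX
  omega

lemma four_lt_egirth (h3 : G.CliqueFree 3)
    (h4 : ∀ u v, u ≠ v → (G.commonNeighbors u v).Subsingleton) : 4 < G.egirth := by
  refine lt_of_lt_of_le (by norm_num : (4 : ℕ∞) < 5) (le_egirth.mpr fun a w hw => ?_)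
  by_contra! hlt
  have hlen : w.length = 3 ∨ w.length = 4 := by
    have := hw.three_le_length
    norm_cast at hlt
    omega
  rcases hlen with hlen | hlen
  · obtain ⟨s, hs⟩ := is3Clique_iff_exists_cycle_length_three.mpr ⟨a, w, hw, hlen⟩
    exact h3 s hs
  · match w, hw, hlen with
    | .cons hab (.cons hbc (.cons hcd (.cons hda .nil))), hw, _ =>
      have hnd := hw.support_nodup
      simp only [Walk.support_cons, Walk.support_nil, List.tail_cons, List.nodup_cons,
        List.mem_cons] at hnd
      exact absurd (h4 _ _ (by tauto) ⟨hab, hbc.symm⟩ ⟨hda.symm, hcd⟩) (by tauto)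

lemma sq_add_one_le_card [Fintype V] [Nonempty V] {d : ℕ} (hreg : ∀ v, degN G v = d)
    (h3 : G.CliqueFree 3) (h4 : ∀ u v, u ≠ v → (G.commonNeighbors u v).Subsingleton) :
    d ^ 2 + 1 ≤ Fintype.card V := by
  classical
  obtain ⟨v⟩ := ‹Nonempty V›
  have hdeg : ∀ w, (G.neighborFinset w).card = d := fun w => by
    rw [card_neighborFinset_eq_degree, ← degN_eq_degree, hreg]
  set N := G.neighborFinset v
  set S := N.biUnion fun w => G.neighborFinset w \ {v}
  have hS : S.card = d * (d - 1) := by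
    rw [Finset.card_biUnion, Finset.sum_congr rfl fun w hw => ?_, Finset.sum_const, hdeg,
      smul_eq_mul]
    · rw [Finset.card_sdiff_of_subset, hdeg, Finset.card_singleton]
      simpa [N] using ((G.mem_neighborFinset v w).mp hw).symm
    · intro w hw w' hw' hne
      refine Finset.disjoint_left.mpr fun x hx hx' => hne ?_
      simp only [N, Finset.mem_coe, Finset.mem_sdiff, mem_neighborFinset,
        Finset.mem_singleton] at hw hw' hx hx'
      exact h4 v x (Ne.symm hx.2) ⟨hw, hx.1.symm⟩ ⟨hw', hx'.1.symm⟩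
  have hNS : Disjoint N S := by
    refine Finset.disjoint_left.mpr fun x hx hxS => ?_
    simp only [S, N, Finset.mem_biUnion, Finset.mem_sdiff, mem_neighborFinset,
      Finset.mem_singleton] at hx hxS
    obtain ⟨w, hvw, hwx, -⟩ := hxS
    exact h3 {v, w, x} (is3Clique_triple_iff.mpr ⟨hvw, hx, hwx⟩)
  have hv : v ∉ N ∪ S := by
    simp [N, S]
  have := Finset.card_le_univ (insert v (N ∪ S))
  rw [Finset.card_insert_of_notMem hv, Finset.card_union_of_disjoint hNS, hS, hdeg] at this
  have hsq : d + d * (d - 1) = d ^ 2 := by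
    rcases d with _ | d
    · rfl
    · rw [Nat.add_sub_cancel]
      ring
  omega

end SimpleGraph

section Cubic

variable {G : SimpleGraph V}

lemma lambdaH_le_ncard {h : ℕ} {F : Set (Sym2 V)} (hF : IsExtraEdgeCut G h F) :
    lambdaH G h ≤ F.ncard :=
  Nat.sInf_le ⟨F, hF, rfl⟩

lemma ncard_edgeBoundary_le_card [Finite V] (hreg : ∀ v, degN G v = 3) {X : Finset V}
    (hin : ∀ v ∈ X, 2 ≤ (G.neighborSet v ∩ X).ncard) : (G.edgeBoundary X).ncard ≤ X.card := by
  rw [ncard_edgeBoundary, Finset.card_eq_sum_ones]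
  refine Finset.sum_le_sum fun v hv => ?_
  rw [ncard_neighborSet_sdiff, hreg]
  have := hin v hv
  omega

lemma ncard_edgeBoundary_pair [Finite V] (hreg : ∀ v, degN G v = 3) {x y : V}
    (h : G.Adj x y) : (G.edgeBoundary {x, y}).ncard = 4 := by
  classical
  have hinter : ∀ {u w : V}, G.Adj u w → G.neighborSet u ∩ {u, w} = {w} := fun huw => by
    rw [(G.isClique_pair.mpr fun _ => huw).neighborSet_inter (Set.mem_insert _ _),
      Set.insert_sdiff_self_of_notMem (by simpa using huw.ne)]
  rw [← Finset.coe_pair, ncard_edgeBoundary, Finset.sum_pair h.ne, Finset.coe_pair,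
    ncard_neighborSet_sdiff, ncard_neighborSet_sdiff, hinter h, Set.pair_comm, hinter h.symm,
    hreg, hreg, Set.ncard_singleton, Set.ncard_singleton]

lemma SuperLambda.four_le_lambdaH [Finite V] (hreg : ∀ v, degN G v = 3)
    (hs : SuperLambda G 1) : 4 ≤ lambdaH G 1 := by
  obtain ⟨-, ⟨F₀, hF₀⟩, -, hsuper⟩ := hs
  obtain ⟨F, hF, hFcard⟩ : lambdaH G 1 ∈ {k | ∃ F, IsExtraEdgeCut G 1 F ∧ F.ncard = k} :=
    Nat.sInf_mem ⟨F₀.ncard, F₀, hF₀, rfl⟩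
  obtain ⟨c, hc⟩ := hsuper F hF hFcard
  obtain ⟨x, y, hxy, hsupp⟩ := Set.ncard_eq_two.mp hc
  have hadj : G.Adj x y := deleteEdges_le F (c.adj_of_supp_eq_pair hxy hsupp)
  rw [← hFcard, ← ncard_edgeBoundary_pair hreg hadj, ← hsupp]
  exact Set.ncard_le_ncard c.edgeBoundary_supp_subset

lemma SuperLambda.card_le_ncard_add_two [Fintype V] (hreg : ∀ v, degN G v = 3)
    (hs : SuperLambda G 1) {X : Set V} (hin : ∀ v ∈ X, 2 ≤ (G.neighborSet v ∩ X).ncard)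
    (hcut : IsExtraEdgeCut G 1 (G.edgeBoundary X)) (hle : (G.edgeBoundary X).ncard ≤ 4) :
    Fintype.card V ≤ X.ncard + 2 := by
  have hmin : (G.edgeBoundary X).ncard = lambdaH G 1 :=
    le_antisymm (hle.trans (hs.four_le_lambdaH hreg)) (lambdaH_le_ncard hcut)
  obtain ⟨c, hc⟩ := hs.2.2.2 _ hcut hmin
  obtain ⟨x, y, hxy, hsupp⟩ := Set.ncard_eq_two.mp hc
  have hadj : G.Adj x y := deleteEdges_le _ (c.adj_of_supp_eq_pair hxy hsupp)
  have hboundary : G.edgeBoundary c.supp = G.edgeBoundary X :=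
    Set.eq_of_subset_of_ncard_le c.edgeBoundary_supp_subset
      (by rw [hsupp, ncard_edgeBoundary_pair hreg hadj]; exact hle)
  have huniv := hs.1.eq_univ_of_edgeBoundary_eq_empty ⟨x, by simp [hsupp]⟩
    (edgeBoundary_union_eq_empty (c.disjoint_supp hin hc.le).symm hboundary)
  rw [← Nat.card_eq_fintype_card, ← Set.ncard_univ, ← huniv]
  exact (Set.ncard_union_le _ _).trans (by omega)

lemma SuperLambda.cliqueFree_three [Fintype V] (hreg : ∀ v, degN G v = 3)
    (hs : SuperLambda G 1) (hcard : 4 < Fintype.card V) : G.CliqueFree 3 := by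
  classical
  intro X hX
  have hin : ∀ v ∈ (X : Set V), 2 ≤ (G.neighborSet v ∩ X).ncard := fun v hv => by
    rw [hX.isClique.neighborSet_inter hv, Set.ncard_sdiff_singleton_of_mem hv,
      Set.ncard_coe_finset, hX.card_eq]
  -- an outside vertex with no neighbour outside `X` would complete `X` to a `K₄`
  have hout : ∀ u ∉ (X : Set V), (G.neighborSet u \ X).Nonempty := fun u hu => by
    by_contra h
    rw [Set.not_nonempty_iff_eq_empty, Set.sdiff_eq_empty] at h
    have hN : G.neighborSet u = X := Set.eq_of_subset_of_ncard_le h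
      (by rw [Set.ncard_coe_finset, hX.card_eq, ← hreg u, degN])
    have hK4 : G.IsNClique 4 (insert u X) := hX.insert fun b hb => by
      rw [← mem_neighborSet, hN]
      exact hb
    have := hs.1.card_eq_of_isNClique hreg hK4
    omega
  obtain ⟨v, -, hv⟩ := Finset.exists_mem_notMem_of_card_lt_card
    (t := Finset.univ) (by rw [hX.card_eq, Finset.card_univ]; omega)
  have hcut := isExtraEdgeCut_one_edgeBoundary
    (Finset.coe_nonempty.mpr (Finset.card_pos.mp (by rw [hX.card_eq]; omega))) ⟨v, hv⟩
    (fun v hv => Set.nonempty_of_ncard_ne_zero (by have := hin v hv; omega)) hout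
  have hle := ncard_edgeBoundary_le_card hreg hin
  rw [hX.card_eq] at hle
  have := (hs.four_le_lambdaH hreg).trans (lambdaH_le_ncard hcut)
  omega

lemma SuperLambda.commonNeighbors_subsingleton [Fintype V] (hreg : ∀ v, degN G v = 3)
    (hs : SuperLambda G 1) (h3 : G.CliqueFree 3) (hcard : 6 < Fintype.card V) {u v : V}
    (huv : u ≠ v) : (G.commonNeighbors u v).Subsingleton := by
  classical
  rintro p ⟨hup, hvp⟩ q ⟨huq, hvq⟩
  by_contra hpq
  set X : Finset V := {u, v, p, q} with hX
  have hmem : ∀ {a}, a ∈ X ↔ a = u ∨ a = v ∨ a = p ∨ a = q := by simp [hX]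
  have hadj : ∀ a b, (a = u ∨ a = v) → (b = p ∨ b = q) → G.Adj a b := by
    rintro a b (rfl | rfl) (rfl | rfl) <;> assumption
  have two_le : ∀ {w a b : V}, a ≠ b → G.Adj w a → G.Adj w b → a ∈ X → b ∈ X →
      2 ≤ (G.neighborSet w ∩ X).ncard := fun hab ha hb haX hbX =>
    (Set.ncard_pair hab).ge.trans (Set.ncard_le_ncard
      (Set.insert_subset ⟨ha, haX⟩ (Set.singleton_subset_iff.mpr ⟨hb, hbX⟩)))
  have hin : ∀ w ∈ (X : Set V), 2 ≤ (G.neighborSet w ∩ X).ncard := by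
    rintro w hw
    rcases hmem.mp hw with rfl | rfl | rfl | rfl
    · exact two_le hpq hup huq (hmem.mpr (by tauto)) (hmem.mpr (by tauto))
    · exact two_le hpq hvp hvq (hmem.mpr (by tauto)) (hmem.mpr (by tauto))
    · exact two_le huv hup.symm hvp.symm (hmem.mpr (by tauto)) (hmem.mpr (by tauto))
    · exact two_le huv huq.symm hvq.symm (hmem.mpr (by tauto)) (hmem.mpr (by tauto))
  -- `X` spans a `K₂,₂`, so a triangle-free vertex sees at most one of its sides
  have hout : ∀ w ∉ (X : Set V), (G.neighborSet w \ X).Nonempty := fun w hw => by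
    by_contra h
    rw [Set.not_nonempty_iff_eq_empty, Set.sdiff_eq_empty] at h
    have hside : G.neighborSet w ⊆ {u, v} ∨ G.neighborSet w ⊆ {p, q} := by
      by_contra! hboth
      obtain ⟨a, ha, haS⟩ := Set.not_subset.mp hboth.1
      obtain ⟨b, hb, hbS⟩ := Set.not_subset.mp hboth.2
      have haX := hmem.mp (h ha)
      have hbX := hmem.mp (h hb)
      simp only [Set.mem_insert_iff, Set.mem_singleton_iff] at haS hbS
      exact h3 {w, b, a} (is3Clique_triple_iff.mpr ⟨hb, ha, hadj b a (by tauto) (by tauto)⟩)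
    have hpair : ∀ a b : V, ({a, b} : Set V).ncard ≤ 2 := fun a b =>
      (Set.ncard_insert_le a {b}).trans (by rw [Set.ncard_singleton])
    have h3w : (G.neighborSet w).ncard = 3 := hreg w
    rcases hside with hS | hS
    · exact absurd ((Set.ncard_le_ncard hS).trans (hpair u v)) (by omega)
    · exact absurd ((Set.ncard_le_ncard hS).trans (hpair p q)) (by omega)
  have hXcard : X.card ≤ 4 := Finset.card_le_four
  obtain ⟨w, -, hw⟩ := Finset.exists_mem_notMem_of_card_lt_card
    (s := X) (t := Finset.univ) (by rw [Finset.card_univ]; omega)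
  have hcut := isExtraEdgeCut_one_edgeBoundary ⟨u, hmem.mpr (Or.inl rfl)⟩ ⟨w, hw⟩
    (fun v hv => Set.nonempty_of_ncard_ne_zero (by have := hin v hv; omega)) hout
  have := hs.card_le_ncard_add_two hreg hin hcut
    ((ncard_edgeBoundary_le_card hreg hin).trans hXcard)
  rw [Set.ncard_coe_finset] at this
  omega

end Cubic

/-- A 3-regular super-`λ'` graph of order `2n` with `n ≥ 4` has girth greater than `4`
and `n ≠ 4`. -/
theorem stmt7 {V : Type*} [Fintype V] (G : SimpleGraph V) (n : ℕ) (hn : 4 ≤ n)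
    (hcard : Fintype.card V = 2 * n) (hreg : ∀ v, degN G v = 3)
    (hs : SuperLambda G 1) :
    (4 : ℕ∞) < G.egirth ∧ n ≠ 4 := by
  have h3 : G.CliqueFree 3 := hs.cliqueFree_three hreg (by omega)
  have h4 : ∀ u v, u ≠ v → (G.commonNeighbors u v).Subsingleton :=
    fun _ _ => hs.commonNeighbors_subsingleton hreg h3 (by omega)
  refine ⟨four_lt_egirth h3 h4, fun hn4 => ?_⟩
  have : Nonempty V := Fintype.card_pos_iff.mp (by omega)
  have := sq_add_one_le_card hreg h3 h4
  omega
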